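/- arXiv:1902.03045 — 2 statements merged into one kernel-verified Lean document; each statement's English description precedes it below -/
import Mathlib

section
/- Let K ∈ ℝ^{m×m} be symmetric positive semidefinite and β > 0. If A = (K + βI − (1/m)11ᵀK)^{-1}(P − (1/m)11ᵀP) and b = (1/m)(Pᵀ1 − AᵀKᵀ1) are well-defined, then (A, b) satisfies the stationarity conditions K(KA + 1bᵀ − P) + βKA = 0 and (KA + 1bᵀ − P)ᵀ1 = 0 of the kernel ridge regression objective ‖KA + 1bᵀ − P‖_F² + β·tr(AᵀKA). -/
open Matrix

/-- The closed-form (A, b) satisfies the stationarity conditions of the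
kernel ridge regression objective. -/
theorem stmt_9 {m l : ℕ} [NeZero m] (K : Matrix (Fin m) (Fin m) ℝ)
    (hK : K.PosSemidef) (β : ℝ) (hβ : 0 < β)
    (P : Matrix (Fin m) (Fin l) ℝ)
    (J : Matrix (Fin m) (Fin m) ℝ) (hJ : J = Matrix.of fun _ _ => (1 : ℝ))
    (M : Matrix (Fin m) (Fin m) ℝ)
    (hM : M = K + β • (1 : Matrix (Fin m) (Fin m) ℝ) - (1 / (m : ℝ)) • (J * K))
    (hMunit : IsUnit M)
    (A : Matrix (Fin m) (Fin l) ℝ) (hA : A = M⁻¹ * (P - (1 / (m : ℝ)) • (J * P)))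
    (b : Fin l → ℝ)
    (hb : b = (1 / (m : ℝ)) • (Pᵀ *ᵥ (fun _ => 1) - Aᵀ *ᵥ (Kᵀ *ᵥ (fun _ => 1)))) :
    K * (K * A + Matrix.of (fun _ j => b j) - P) + β • (K * A) = 0 ∧
    (K * A + Matrix.of (fun _ j => b j) - P)ᵀ *ᵥ (fun _ => 1) = 0 := by
  have hm : (m:ℝ) ≠ 0 := Nat.cast_ne_zero.mpr (NeZero.ne m)
  have hdet : IsUnit M.det := (Matrix.isUnit_iff_isUnit_det M).mp hMunit
  have hMA : M * A = P - (1 / (m:ℝ)) • (J * P) := by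
    rw [hA, Matrix.mul_nonsing_inv_cancel_left _ _ hdet]
  have h2 : K * A + β • A - (1/(m:ℝ)) • (J * (K * A)) = P - (1/(m:ℝ)) • (J * P) := by
    rw [← hMA, hM]
    simp [Matrix.sub_mul, Matrix.add_mul, Matrix.smul_mul, Matrix.mul_assoc]
  have hB : Matrix.of (fun _ j => b j) = (1/(m:ℝ)) • (J * P - J * (K * A)) := by
    ext i j
    simp only [hb, hJ, Matrix.of_apply, Matrix.smul_apply, Matrix.sub_apply,
      Matrix.mul_apply, Pi.smul_apply, Pi.sub_apply, Matrix.mulVec, dotProduct,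
      Matrix.transpose_apply, smul_eq_mul, one_mul, Finset.mul_sum]
    congr 1
    congr 1
    · ring_nf
    · rw [Finset.sum_comm]
      simp [mul_comm]
  constructor
  · have key : K * A + (1/(m:ℝ)) • (J * P - J * (K * A)) - P = -(β • A) := by
      linear_combination (norm := module) h2
    rw [hB, key]
    rw [Matrix.mul_neg, Matrix.mul_smul]
    exact neg_add_cancel _
  · ext j
    have hbj : b j = (1/(m:ℝ)) * (∑ i, P i j - ∑ i, (K * A) i j) := by
      simp only [hb, Pi.smul_apply, Pi.sub_apply, Matrix.mulVec, dotProduct,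
        Matrix.transpose_apply, smul_eq_mul, mul_one]
      congr 1
      congr 1
      simp only [Matrix.mul_apply, Finset.mul_sum]
      rw [Finset.sum_comm]
      simp [mul_comm]
    simp only [Matrix.mulVec, dotProduct, Matrix.transpose_apply, Matrix.sub_apply,
      Matrix.add_apply, Matrix.of_apply, mul_one, Pi.zero_apply]
    rw [Finset.sum_sub_distrib, Finset.sum_add_distrib, Finset.sum_const, hbj]
    simp
    field_simp
    ring
end

section
/- In the two-label surrogate problem of the previous statement, if λ ≥ 2(1 − (q₁ − q₂)) then the optimal solution is the deterministic pseudo-label p* = (1, 0); i.e., a sufficiently large infinity-norm regularization weight forces hard pseudo-labeling of the label with maximal modeling output. -/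
/-- A sufficiently large infinity-norm regularization weight forces hard
pseudo-labeling of the label with maximal modeling output. -/
theorem stmt_17 (q1 q2 lam : ℝ) (hq : q2 ≤ q1) (hlam : 0 ≤ lam)
    (hlam2 : 2 * (1 - (q1 - q2)) ≤ lam)
    (D : Set (ℝ × ℝ))
    (hD : D = {p | p.1 + p.2 = 1 ∧ 0 ≤ p.1 ∧ p.1 ≤ 1 ∧ 0 ≤ p.2 ∧ p.2 ≤ 1 ∧ p.2 ≤ p.1})
    (g : ℝ × ℝ → ℝ) (hg : g = fun p => (p.1 - q1) ^ 2 + (p.2 - q2) ^ 2 - lam * p.1) :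
    ((1, 0) ∈ D ∧ ∀ p ∈ D, g (1, 0) ≤ g p) ∧
    ∀ p ∈ D, (∀ p' ∈ D, g p ≤ g p') → p = (1, 0) := by
  subst hD hg
  have hmem : ((1 : ℝ), (0 : ℝ)) ∈ {p : ℝ × ℝ | p.1 + p.2 = 1 ∧ 0 ≤ p.1 ∧ p.1 ≤ 1 ∧ 0 ≤ p.2 ∧ p.2 ≤ 1 ∧ p.2 ≤ p.1} := by
    norm_num
  refine ⟨⟨hmem, ?_⟩, ?_⟩
  · rintro ⟨a, b⟩ ⟨hab, ha0, ha1, hb0, hb1, hba⟩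
    simp only at *
    have hb' : b = 1 - a := by linarith
    subst hb'
    nlinarith [mul_nonneg (by linarith : (0:ℝ) ≤ 1 - a) (by linarith : (0:ℝ) ≤ lam + 2*(q1-q2) - 2*a)]
  · rintro ⟨a, b⟩ ⟨hab, ha0, ha1, hb0, hb1, hba⟩ hmin
    have h := hmin (1, 0) hmem
    simp only at *
    have hb' : b = 1 - a := by linarith
    subst hb'
    have ha : a = 1 := by
      by_contra hne
      have ha' : a < 1 := lt_of_le_of_ne ha1 hne
      nlinarith [mul_pos (by linarith : (0:ℝ) < 1 - a) (by linarith : (0:ℝ) < lam + 2*(q1-q2) - 2*a)]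
    simp [ha, Prod.ext_iff]
end
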